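/- arXiv:1911.07296 — 6 statements merged into one kernel-verified Lean document; each statement's English description precedes it below -/
import Mathlib

section
/- Let S be a semigroup satisfying x*y ∈ {y*x, (x*y)^2} for all x, y in S. Then primary conjugacy ~p is transitive in S: if a ~p b and b ~p c then a ~p c. -/
theorem pconj_trans_sq {S : Type*} [Semigroup S]
    (hS : ∀ x y : S, x * y = y * x ∨ x * y = (x * y) * (x * y)) (a b c : S)
    (hab : ∃ u v : WithOne S, (a : WithOne S) = u * v ∧ (b : WithOne S) = v * u)
    (hbc : ∃ u v : WithOne S, (b : WithOne S) = u * v ∧ (c : WithOne S) = v * u) :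
    ∃ u v : WithOne S, (a : WithOne S) = u * v ∧ (c : WithOne S) = v * u := by
  obtain ⟨u, v, ha, hb⟩ := hab
  obtain ⟨s, t, hb', hc⟩ := hbc
  rcases eq_or_ne u 1 with rfl | hu
  · have h1 : (a : WithOne S) = (b : WithOne S) := by rw [ha, hb, one_mul, mul_one]
    obtain rfl := WithOne.coe_inj.mp h1
    exact ⟨s, t, hb', hc⟩
  rcases eq_or_ne v 1 with rfl | hv
  · have h1 : (a : WithOne S) = (b : WithOne S) := by rw [ha, hb, one_mul, mul_one]
    obtain rfl := WithOne.coe_inj.mp h1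
    exact ⟨s, t, hb', hc⟩
  rcases eq_or_ne s 1 with rfl | hs
  · have h1 : (b : WithOne S) = (c : WithOne S) := by rw [hb', hc, one_mul, mul_one]
    obtain rfl := WithOne.coe_inj.mp h1
    exact ⟨u, v, ha, hb⟩
  rcases eq_or_ne t 1 with rfl | ht
  · have h1 : (b : WithOne S) = (c : WithOne S) := by rw [hb', hc, one_mul, mul_one]
    obtain rfl := WithOne.coe_inj.mp h1
    exact ⟨u, v, ha, hb⟩
  obtain ⟨u₀, rfl⟩ := WithOne.ne_one_iff_exists.mp hu
  obtain ⟨v₀, rfl⟩ := WithOne.ne_one_iff_exists.mp hv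
  obtain ⟨s₀, rfl⟩ := WithOne.ne_one_iff_exists.mp hs
  obtain ⟨t₀, rfl⟩ := WithOne.ne_one_iff_exists.mp ht
  rw [← WithOne.coe_mul, WithOne.coe_inj] at ha hb hb' hc
  rcases hS u₀ v₀ with hcomm | ha2
  · -- u₀ and v₀ commute, so a = b
    have hab' : a = b := by rw [ha, hcomm, ← hb]
    exact ⟨↑s₀, ↑t₀, by rw [hab', hb', WithOne.coe_mul],
      by rw [hc, WithOne.coe_mul]⟩
  rcases hS s₀ t₀ with hcomm | hb2
  · -- s₀ and t₀ commute, so b = c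
    have hbc' : b = c := by rw [hb', hcomm, ← hc]
    exact ⟨↑u₀, ↑v₀, by rw [ha, WithOne.coe_mul],
      by rw [← hbc', hb, WithOne.coe_mul]⟩
  rcases hS t₀ s₀ with hcomm | hc2
  · -- t₀ and s₀ commute, so b = c
    have hbc' : b = c := by rw [hb', ← hcomm, ← hc]
    exact ⟨↑u₀, ↑v₀, by rw [ha, WithOne.coe_mul],
      by rw [← hbc', hb, WithOne.coe_mul]⟩
  -- main case: a, s₀*t₀ and c are all idempotent
  have h : v₀ * u₀ = s₀ * t₀ := by rw [← hb, hb']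
  refine ⟨↑(u₀ * (s₀ * (t₀ * s₀))), ↑((t₀ * s₀) * (t₀ * v₀)), ?_, ?_⟩
  · rw [← WithOne.coe_mul, WithOne.coe_inj, ha]
    calc u₀ * v₀ = (u₀ * v₀) * (u₀ * v₀) := ha2
      _ = u₀ * ((v₀ * u₀) * v₀) := by simp only [mul_assoc]
      _ = u₀ * ((s₀ * t₀) * v₀) := by rw [h]
      _ = u₀ * (((s₀ * t₀) * (s₀ * t₀)) * v₀) := by rw [← hb2]
      _ = u₀ * (s₀ * ((t₀ * s₀) * (t₀ * v₀))) := by simp only [mul_assoc]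
      _ = u₀ * (s₀ * (((t₀ * s₀) * (t₀ * s₀)) * (t₀ * v₀))) := by rw [← hc2]
      _ = (u₀ * (s₀ * (t₀ * s₀))) * ((t₀ * s₀) * (t₀ * v₀)) := by
          simp only [mul_assoc]
  · rw [← WithOne.coe_mul, WithOne.coe_inj, hc]
    calc t₀ * s₀
        = ((t₀ * s₀) * (t₀ * s₀)) * ((t₀ * s₀) * (t₀ * s₀)) := by
          rw [← hc2, ← hc2]
      _ = (t₀ * s₀) * ((t₀ * (s₀ * t₀)) * (s₀ * (t₀ * s₀))) := by
          simp only [mul_assoc]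
      _ = (t₀ * s₀) * ((t₀ * (v₀ * u₀)) * (s₀ * (t₀ * s₀))) := by rw [h]
      _ = ((t₀ * s₀) * (t₀ * v₀)) * (u₀ * (s₀ * (t₀ * s₀))) := by
          simp only [mul_assoc]
end

section
/- Let n > 1 be an integer and let S be a semigroup satisfying x*y ∈ {y*x, (x*y)^n} for all x, y in S. Then primary conjugacy ~p is transitive in S: if a ~p b and b ~p c then a ~p c. -/
private lemma sandwich_pow {M : Type*} [Monoid M] (x y : M) :
    ∀ k : ℕ, y * (x * y) ^ k * x = (y * x) ^ (k + 1) := by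
  intro k
  induction k with
  | zero => simp [pow_succ]
  | succ k ih =>
    rw [pow_succ, pow_succ]
    calc y * ((x * y) ^ k * (x * y)) * x
        = (y * (x * y) ^ k * x) * (y * x) := by
          simp [mul_assoc]
      _ = (y * x) ^ (k + 1) * (y * x) := by rw [ih]

private lemma key_lemma {M : Type*} [Monoid M] (n : ℕ) (hn : 1 < n)
    (a b c u v s t : M)
    (hau : a = u * v) (hbv : b = v * u) (hbs : b = s * t) (hct : c = t * s)
    (ha : a = a ^ n) (hb : b = b ^ n) (hc : c = c ^ n) :
    ∃ U V : M, a = U * V ∧ c = V * U := by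
  -- basic power facts for b
  have hb2 : b ^ (2 * n - 2) = b ^ (n - 1) := by
    have h1 : 2 * n - 2 = (n - 2) + n := by omega
    have h2 : (n - 2) + 1 = n - 1 := by omega
    rw [h1, pow_add, ← hb, ← pow_succ, h2]
  have hb3 : b ^ (n - 1) * b ^ (n - 1) * b ^ (n - 1) = b ^ (n - 1) := by
    rw [← pow_add, ← pow_add]
    have h1 : n - 1 + (n - 1) + (n - 1) = (n - 1) + (2 * n - 2) := by omega
    rw [h1, pow_add, hb2, ← pow_add]
    have h2 : n - 1 + (n - 1) = 2 * n - 2 := by omega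
    rw [h2, hb2]
  have hbmid : b ^ (n - 1) * b * b ^ (n - 1) = b := by
    rw [← pow_succ, ← pow_add]
    have h1 : n - 1 + 1 + (n - 1) = (n - 1) + n := by omega
    rw [h1, pow_add, ← hb, ← pow_succ]
    have h3 : n - 1 + 1 = n := by omega
    rw [h3, ← hb]
  -- v * a^(n-2) * u = b^(n-1)
  have hvau : v * a ^ (n - 2) * u = b ^ (n - 1) := by
    rw [hau, sandwich_pow u v (n - 2), ← hbv]
    congr 1
    omega
  -- t * b^(n-1) * s = c
  have htbs : t * b ^ (n - 1) * s = c := by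
    rw [hbs, sandwich_pow s t (n - 1), ← hct]
    have h1 : n - 1 + 1 = n := by omega
    rw [h1, ← hc]
  refine ⟨u * b ^ (n - 1) * s, t * b ^ (n - 1) * (v * a ^ (n - 2)), ?_, ?_⟩
  · -- a = U * V
    have hst : s * t = b := hbs.symm
    calc a = a ^ n := ha
      _ = a ^ 2 * a ^ (n - 2) := by rw [← pow_add]; congr 1; omega
      _ = u * (b ^ (n - 1) * b * b ^ (n - 1)) * (v * a ^ (n - 2)) := by
          rw [hbmid, hbv, hau]
          simp [pow_two, mul_assoc]
      _ = u * b ^ (n - 1) * s * (t * b ^ (n - 1) * (v * a ^ (n - 2))) := by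
          rw [← hst]; simp [mul_assoc]
  · -- c = V * U
    calc c = t * b ^ (n - 1) * s := htbs.symm
      _ = t * (b ^ (n - 1) * b ^ (n - 1) * b ^ (n - 1)) * s := by rw [hb3]
      _ = t * b ^ (n - 1) * (v * a ^ (n - 2)) * (u * b ^ (n - 1) * s) := by
          rw [← hvau]; simp [mul_assoc]

theorem pconj_trans_pow {S : Type*} [Semigroup S] (n : ℕ) (hn : 1 < n)
    (hS : ∀ x y : S, x * y = y * x ∨ ((x * y : S) : WithOne S) = ((x * y : S) : WithOne S) ^ n)
    (a b c : S)
    (hab : ∃ u v : WithOne S, (a : WithOne S) = u * v ∧ (b : WithOne S) = v * u)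
    (hbc : ∃ u v : WithOne S, (b : WithOne S) = u * v ∧ (c : WithOne S) = v * u) :
    ∃ u v : WithOne S, (a : WithOne S) = u * v ∧ (c : WithOne S) = v * u := by
  obtain ⟨u, v, hau, hbv⟩ := hab
  obtain ⟨s, t, hbs, hct⟩ := hbc
  -- degenerate cases
  by_cases hu : u = 1
  · subst hu
    rw [one_mul] at hau; rw [mul_one] at hbv
    have hab' : (a : WithOne S) = (b : WithOne S) := hau.trans hbv.symm
    exact ⟨s, t, hab'.trans hbs, hct⟩
  by_cases hv : v = 1
  · subst hv
    rw [mul_one] at hau; rw [one_mul] at hbv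
    have hab' : (a : WithOne S) = (b : WithOne S) := hau.trans hbv.symm
    exact ⟨s, t, hab'.trans hbs, hct⟩
  by_cases hs : s = 1
  · subst hs
    rw [one_mul] at hbs; rw [mul_one] at hct
    have hbc' : (b : WithOne S) = (c : WithOne S) := hbs.trans hct.symm
    exact ⟨u, v, hau, hbc'.symm.trans hbv⟩
  by_cases ht : t = 1
  · subst ht
    rw [mul_one] at hbs; rw [one_mul] at hct
    have hbc' : (b : WithOne S) = (c : WithOne S) := hbs.trans hct.symm
    exact ⟨u, v, hau, hbc'.symm.trans hbv⟩
  -- now all are coercions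
  obtain ⟨u0, rfl⟩ := WithOne.ne_one_iff_exists.mp hu
  obtain ⟨v0, rfl⟩ := WithOne.ne_one_iff_exists.mp hv
  obtain ⟨s0, rfl⟩ := WithOne.ne_one_iff_exists.mp hs
  obtain ⟨t0, rfl⟩ := WithOne.ne_one_iff_exists.mp ht
  rcases hS u0 v0 with h1 | h1
  · -- a = b
    have hab' : (a : WithOne S) = (b : WithOne S) := by
      rw [hau, hbv, ← WithOne.coe_mul, ← WithOne.coe_mul, h1]
    exact ⟨s0, t0, hab'.trans hbs, hct⟩
  rcases hS v0 u0 with h2 | h2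
  · have hab' : (a : WithOne S) = (b : WithOne S) := by
      rw [hau, hbv, ← WithOne.coe_mul, ← WithOne.coe_mul, h2]
    exact ⟨s0, t0, hab'.trans hbs, hct⟩
  rcases hS s0 t0 with h3 | h3
  · have hbc' : (b : WithOne S) = (c : WithOne S) := by
      rw [hbs, hct, ← WithOne.coe_mul, ← WithOne.coe_mul, h3]
    exact ⟨u0, v0, hau, hbc'.symm.trans hbv⟩
  rcases hS t0 s0 with h4 | h4
  · have hbc' : (b : WithOne S) = (c : WithOne S) := by
      rw [hbs, hct, ← WithOne.coe_mul, ← WithOne.coe_mul, h4]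
    exact ⟨u0, v0, hau, hbc'.symm.trans hbv⟩
  -- power case
  have ha' : (a : WithOne S) = (a : WithOne S) ^ n := by
    rw [hau, ← WithOne.coe_mul]; exact h1
  have hb' : (b : WithOne S) = (b : WithOne S) ^ n := by
    rw [hbv, ← WithOne.coe_mul]; exact h2
  have hc' : (c : WithOne S) = (c : WithOne S) ^ n := by
    rw [hct, ← WithOne.coe_mul]; exact h4
  exact key_lemma n hn _ _ _ _ _ _ _ hau hbv hbs hct ha' hb' hc'
end

section
/- In any semigroup S with elements a₁, a₂, b₁, b₂ and n ≥ 2, if a = a₁*a₂, b = a₂*a₁ = b₁*b₂, c = b₂*b₁, and a = a^n and c = c^n, then a = (a₁*b₁)*(b₂*b^(n-2)*a₂) and c = (b₂*b^(n-2)*a₂)*(a₁*b₁), where b^0 is interpreted as an adjoined identity (i.e., for n = 2 the conclusion is a = (a₁*b₁)*(b₂*a₂) and c = (b₂*a₂)*(a₁*b₁)). -/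
private lemma shift_pow {M : Type*} [Monoid M] (x y : M) (k : ℕ) :
    x * (y * x) ^ k = (x * y) ^ k * x := by
  induction k with
  | zero => simp
  | succ k ih =>
      calc x * (y * x) ^ (k + 1) = (x * (y * x) ^ k) * (y * x) := by
            rw [pow_succ, ← mul_assoc]
        _ = (x * y) ^ k * x * (y * x) := by rw [ih]
        _ = (x * y) ^ (k + 1) * x := by rw [pow_succ]; simp [mul_assoc]

theorem key_factorization {S : Type*} [Semigroup S] (n : ℕ) (hn : 2 ≤ n)
    (a b c a₁ a₂ b₁ b₂ : WithOne S)
    (ha : a = a₁ * a₂) (hb : b = a₂ * a₁) (hb' : b = b₁ * b₂) (hc : c = b₂ * b₁)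
    (han : a ^ n = a) (hcn : c ^ n = c) :
    a = (a₁ * b₁) * (b₂ * b ^ (n - 2) * a₂) ∧
    c = (b₂ * b ^ (n - 2) * a₂) * (a₁ * b₁) := by
  obtain ⟨m, rfl⟩ : ∃ m, n = m + 2 := ⟨n - 2, by omega⟩
  subst ha hb hc
  rw [hb']
  simp only [Nat.add_sub_cancel]
  constructor
  · calc a₁ * a₂ = (a₁ * a₂) ^ (m + 2) := han.symm
      _ = (a₁ * a₂) ^ (m + 1) * (a₁ * a₂) := pow_succ _ _
      _ = a₁ * (a₂ * a₁) ^ (m + 1) * a₂ := by rw [shift_pow]; simp [mul_assoc]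
      _ = (a₁ * b₁) * (b₂ * (b₁ * b₂) ^ m * a₂) := by
          rw [pow_succ']; simp [mul_assoc, hb']
  · calc b₂ * b₁ = (b₂ * b₁) ^ (m + 2) := hcn.symm
      _ = (b₂ * b₁) ^ (m + 1) * (b₂ * b₁) := pow_succ _ _
      _ = b₂ * (b₁ * b₂) ^ (m + 1) * b₁ := by rw [shift_pow]; simp [mul_assoc]
      _ = (b₂ * (b₁ * b₂) ^ m * a₂) * (a₁ * b₁) := by
          have h2 : b₁ * (b₂ * b₁) = a₂ * (a₁ * b₁) := by
            rw [← mul_assoc, ← hb', mul_assoc]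
          rw [pow_succ]; simp [mul_assoc, h2]
end

section
/- Let S be a semigroup in which every element of the form x*y is idempotent ((x*y)^2 = x*y for all x, y). Then primary conjugacy ~p is transitive in S. -/
/-!
If `a = u v`, `b = v u = s t` and `c = t s`, then, because every product is idempotent,
`a = (u v)(u v) = u (v u) v = (u s)(t v)` and likewise `c = (t s)(t s) = t (s t) s = (t v)(u s)`,
so `u s` and `t v` conjugate `a` to `c`. A factor equal to the adjoined `1` just means `a = b`
(or `b = c`).
-/

namespace WithOne

variable {S : Type*} [Semigroup S]

lemma eq_or_exists_of_coe_eq_mul_of_coe_eq_mul_swap {a b : S} {u v : WithOne S}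
    (ha : (a : WithOne S) = u * v) (hb : (b : WithOne S) = v * u) :
    a = b ∨ ∃ u' v' : S, a = u' * v' ∧ b = v' * u' := by
  induction u using WithOne.recOneCoe with
  | one => exact .inl (coe_inj.mp (by rw [ha, hb, one_mul, mul_one]))
  | coe u =>
    induction v using WithOne.recOneCoe with
    | one => exact .inl (coe_inj.mp (by rw [ha, hb, one_mul, mul_one]))
    | coe v =>
      exact .inr ⟨u, v, coe_inj.mp (by rw [ha, coe_mul]), coe_inj.mp (by rw [hb, coe_mul])⟩

end WithOne

section IdempotentProducts

variable {S : Type*} [Semigroup S]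

lemma IsIdempotentElem.mul_eq_mul_mul_swap_mul {u v : S} (h : IsIdempotentElem (u * v)) :
    u * v = u * (v * u) * v := by
  calc u * v = (u * v) * (u * v) := h.symm
    _ = u * (v * u) * v := by simp only [mul_assoc]

lemma mul_swap_trans_of_isIdempotentElem {a b c u v s t : S} (ha : a = u * v) (hb : b = v * u)
    (hb' : b = s * t) (hc : c = t * s) (ha_idem : IsIdempotentElem a)
    (hc_idem : IsIdempotentElem c) : a = (u * s) * (t * v) ∧ c = (t * v) * (u * s) := by
  subst ha hc
  constructor
  · calc u * v = u * (v * u) * v := ha_idem.mul_eq_mul_mul_swap_mul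
      _ = (u * s) * (t * v) := by rw [← hb, hb']; simp only [mul_assoc]
  · calc t * s = t * (s * t) * s := hc_idem.mul_eq_mul_mul_swap_mul
      _ = (t * v) * (u * s) := by rw [← hb', hb]; simp only [mul_assoc]

end IdempotentProducts

open WithOne in
theorem pconj_trans_of_idem {S : Type*} [Semigroup S]
    (hS : ∀ x y : S, (x * y) * (x * y) = x * y) (a b c : S)
    (hab : ∃ u v : WithOne S, (a : WithOne S) = u * v ∧ (b : WithOne S) = v * u)
    (hbc : ∃ u v : WithOne S, (b : WithOne S) = u * v ∧ (c : WithOne S) = v * u) :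
    ∃ u v : WithOne S, (a : WithOne S) = u * v ∧ (c : WithOne S) = v * u := by
  obtain ⟨u, v, ha, hb⟩ := hab
  obtain ⟨s, t, hb', hc⟩ := hbc
  rcases eq_or_exists_of_coe_eq_mul_of_coe_eq_mul_swap ha hb with rfl | ⟨u, v, ha, hb⟩
  · exact ⟨s, t, hb', hc⟩
  rcases eq_or_exists_of_coe_eq_mul_of_coe_eq_mul_swap hb' hc with rfl | ⟨s, t, hb', hc⟩
  · exact ⟨u, v, by rw [ha, coe_mul], by rw [hb, coe_mul]⟩
  obtain ⟨ha, hc⟩ := mul_swap_trans_of_isIdempotentElem ha hb hb' hc (ha ▸ hS u v) (hc ▸ hS t s)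
  exact ⟨↑(u * s), ↑(t * v), by rw [ha, coe_mul], by rw [hc, coe_mul]⟩
end

section
/- Let n > 1 and let S be a semigroup satisfying x*y ∈ {y*x, (x*y)^n} for all x, y. If a, b ∈ S satisfy a = u*v and b = v*u with a ≠ b (u, v ∈ S¹), then a^n = a and b^n = b. -/
theorem WithOne.exists_coe_coe_of_mul_ne_mul {M : Type*} [Mul M] {u v : WithOne M}
    (h : u * v ≠ v * u) : ∃ x y : M, u = x ∧ v = y := by
  induction u using WithOne.recOneCoe with
  | one => simp at h
  | coe x =>
    induction v using WithOne.recOneCoe with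
    | one => simp at h
    | coe y => exact ⟨x, y, rfl, rfl⟩

theorem pconj_pow_eq_general {S : Type*} [Semigroup S] (n : ℕ)
    (hS : ∀ x y : S, x * y = y * x ∨ ((x * y : S) : WithOne S) = ((x * y : S) : WithOne S) ^ n)
    (a b : S) (u v : WithOne S)
    (ha : (a : WithOne S) = u * v) (hb : (b : WithOne S) = v * u) (hab : a ≠ b) :
    (a : WithOne S) ^ n = (a : WithOne S) ∧ (b : WithOne S) ^ n = (b : WithOne S) := by
  have huv : u * v ≠ v * u := by
    rw [← ha, ← hb]
    exact_mod_cast hab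
  obtain ⟨x, y, rfl, rfl⟩ := WithOne.exists_coe_coe_of_mul_ne_mul huv
  obtain rfl : a = x * y := WithOne.coe_inj.mp ha
  obtain rfl : b = y * x := WithOne.coe_inj.mp hb
  exact ⟨((hS x y).resolve_left hab).symm, ((hS y x).resolve_left hab.symm).symm⟩

theorem pconj_pow_eq {S : Type*} [Semigroup S] (n : ℕ) (hn : 1 < n)
    (hS : ∀ x y : S, x * y = y * x ∨ ((x * y : S) : WithOne S) = ((x * y : S) : WithOne S) ^ n)
    (a b : S) (u v : WithOne S)
    (ha : (a : WithOne S) = u * v) (hb : (b : WithOne S) = v * u) (hab : a ≠ b) :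
    (a : WithOne S) ^ n = (a : WithOne S) ∧ (b : WithOne S) ^ n = (b : WithOne S) :=
  pconj_pow_eq_general n hS a b u v ha hb hab
end

section
/- Let n > 1 and let M be a monoid satisfying x*y ∈ {y*x, (x*y)^n} for all x, y in M. Then the relation a ~p b iff ∃ u v ∈ M, a = u*v ∧ b = v*u, is an equivalence relation on M. -/
lemma pconj_pow_aux {M : Type*} [Monoid M] (u v : M) (k : ℕ) :
    (u * v) ^ (k + 1) = u * (v * u) ^ k * v := by
  induction k with
  | zero => simp
  | succ k ih =>
    rw [pow_succ', ih, pow_succ']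
    simp [mul_assoc]

theorem pconj_equivalence {M : Type*} [Monoid M] (n : ℕ) (hn : 1 < n)
    (hM : ∀ x y : M, x * y = y * x ∨ x * y = (x * y) ^ n) :
    Equivalence (fun a b : M => ∃ u v : M, a = u * v ∧ b = v * u) := by
  constructor
  · intro a; exact ⟨a, 1, by simp, by simp⟩
  · rintro a b ⟨u, v, ha, hb⟩; exact ⟨v, u, hb, ha⟩
  · rintro a b c ⟨u, v, ha, hb⟩ ⟨s, t, hb', hc⟩
    rcases hM u v with h1 | h1
    · exact ⟨s, t, by rw [ha, h1, ← hb, hb'], hc⟩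
    rcases hM t s with h2 | h2
    · exact ⟨u, v, ha, by rw [hc, h2, ← hb', hb]⟩
    obtain ⟨m, rfl⟩ : ∃ m, n = m + 2 := ⟨n - 2, by omega⟩
    have hst : s * t = v * u := by rw [← hb', hb]
    refine ⟨u * (v * u) ^ m * s, t * v, ?_, ?_⟩
    · calc a = (u * v) ^ (m + 2) := by rw [ha, ← h1]
        _ = u * (v * u) ^ (m + 1) * v := pconj_pow_aux u v (m + 1)
        _ = u * (v * u) ^ m * ((v * u) * v) := by simp [pow_succ, mul_assoc]
        _ = u * (v * u) ^ m * ((s * t) * v) := by rw [hst]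
        _ = u * (v * u) ^ m * s * (t * v) := by simp [mul_assoc]
    · symm
      calc t * v * (u * (v * u) ^ m * s)
          = t * ((v * u) * (v * u) ^ m) * s := by simp [mul_assoc]
        _ = t * (s * t) ^ (m + 1) * s := by rw [← pow_succ', hst]
        _ = (t * s) ^ (m + 2) := (pconj_pow_aux t s (m + 1)).symm
        _ = c := by rw [← h2, hc]
end
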